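/- Let (Ω(S),T) be a substitution dynamical system satisfying condition (BG). Then the induced substitution S̃ : C → C* is primitive, i.e., there exists r∈ℕ such that for all c,c'∈C the letter c' occurs in S̃^r(c). -/
import Mathlib


open List Filter Topology MeasureTheory

namespace SubstLR

variable {A : Type*}

/-- Apply the substitution `S` to a finite word. -/
def subst (S : A → List A) (w : List A) : List A := w.flatMap S

/-- `iter S n w` is `S^n(w)`. -/
def iter (S : A → List A) (n : ℕ) (w : List A) : List A := (subst S)^[n] w

/-- The set `W(S)` of finite words associated to `S`. -/
def WS (S : A → List A) : Set (List A) := {w | ∃ (a : A) (n : ℕ), w <:+: iter S n [a]}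

/-- `w` is a finite factor of the two-sided infinite word `ω`. -/
def IsFactor (w : List A) (ω : ℤ → A) : Prop :=
  ∃ k : ℤ, w = (List.range w.length).map fun i => ω (k + i)

/-- The subshift `Ω(S)` associated to `S`. -/
def OmegaS (S : A → List A) : Set (ℤ → A) := {ω | ∀ w, IsFactor w ω → w ∈ WS S}

/-- The set `W(Ω(S))` of finite factors of elements of `Ω(S)`. -/
def WOmega (S : A → List A) : Set (List A) := {w | ∃ ω ∈ OmegaS S, IsFactor w ω}

/-- Condition (ℓ): `|S^n(e)| → ∞`. -/
def CondL (S : A → List A) (e : A) : Prop :=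
  Tendsto (fun n => (iter S n [e]).length) atTop atTop

/-- Condition (o): every letter occurs in some `S^n(e)`. -/
def CondO (S : A → List A) (e : A) : Prop := ∀ a : A, ∃ n : ℕ, a ∈ iter S n [e]

/-- Condition (c): `W(S) = W(Ω(S))`. -/
def CondC (S : A → List A) : Prop := WS S = WOmega S

/-- `(Ω(S),T)` is a substitution dynamical system. -/
def IsSubstSystem (S : A → List A) : Prop := (∃ e, CondL S e ∧ CondO S e) ∧ CondC S

/-- `v` occurs with bounded gaps in the set of words `W`. -/
def BddGaps (v : List A) (W : Set (List A)) : Prop :=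
  ∃ L : ℕ, 0 < L ∧ ∀ w ∈ W, L ≤ w.length → v <:+: w

/-- Condition (BG) for the letter `e`. -/
def BG (S : A → List A) (e : A) : Prop := CondL S e ∧ CondO S e ∧ BddGaps [e] (WS S)

/-- The shift by `k`; `shift 1` is the map `T`. -/
def shift (k : ℤ) (ω : ℤ → A) : ℤ → A := fun n => ω (n + k)

/-- `(Ω(S),T)` is minimal: every orbit is dense in `Ω(S)`. -/
def Minimal [TopologicalSpace A] (S : A → List A) : Prop :=
  ∀ ω ∈ OmegaS S, OmegaS S ⊆ closure {ω' | ∃ k : ℤ, ω' = shift k ω}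

/-- `(Ω(S),T)` is linearly repetitive. -/
def LinRep (S : A → List A) : Prop :=
  ∃ C : ℝ, 0 < C ∧ ∀ v ∈ WS S, ∀ w ∈ WS S, C * v.length ≤ (w.length : ℝ) → v <:+: w

/-- `(Ω(S),T)` is aperiodic. -/
def Aperiodic (S : A → List A) : Prop :=
  ∀ ω ∈ OmegaS S, ∀ k : ℤ, k ≠ 0 → shift k ω ≠ ω

/-- The set `B` of letters `a` with `limsup |S^n(a)| < ∞`. -/
def Bset (S : A → List A) : Set A := {a | ∃ M : ℕ, ∀ n, (iter S n [a]).length ≤ M}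

/-- The set `C = A ∖ B`. -/
def Cset (S : A → List A) : Set A := (Bset S)ᶜ

open Classical in
/-- `tilde S w` is the word obtained from `w` by deleting all letters of `B`. -/
noncomputable def tilde (S : A → List A) (w : List A) : List A :=
  w.filter fun x => decide (x ∈ Cset S)

/-- The induced substitution `S̃`. -/
noncomputable def tildeS (S : A → List A) : A → List A := fun x => tilde S (S x)


lemma iter_succ' (S : A → List A) (n : ℕ) (w : List A) :
    iter S (n + 1) w = subst S (iter S n w) := Function.iterate_succ_apply' _ _ _

lemma iter_succ'' (S : A → List A) (n : ℕ) (w : List A) :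
    iter S (n + 1) w = iter S n (subst S w) := Function.iterate_succ_apply _ _ _

lemma iter_add' (S : A → List A) (m n : ℕ) (w : List A) :
    iter S (m + n) w = iter S m (iter S n w) := Function.iterate_add_apply _ _ _ _

lemma subst_append (S : A → List A) (u v : List A) :
    subst S (u ++ v) = subst S u ++ subst S v := by simp [subst]

lemma iter_infix (S : A → List A) (n : ℕ) {u w : List A} (h : u <:+: w) :
    iter S n u <:+: iter S n w := by
  induction n with
  | zero => exact h
  | succ k ih =>
    rw [iter_succ', iter_succ']
    obtain ⟨s, t, hst⟩ := ih
    exact ⟨subst S s, subst S t, by rw [← hst]; simp [subst_append]⟩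

lemma mem_iter_trans (S : A → List A) {a b c : A} {p q : ℕ}
    (h1 : b ∈ iter S p [a]) (h2 : c ∈ iter S q [b]) : c ∈ iter S (q + p) [a] := by
  rw [iter_add']
  obtain ⟨s, t, hst⟩ := List.append_of_mem h1
  have hinf : [b] <:+: iter S p [a] := ⟨s, t, by simp [hst]⟩
  exact ((iter_infix S q hinf).sublist.subset) h2

lemma mem_Bset_of_mem_subst {S : A → List A} {b a : A} (hb : b ∈ Bset S) (ha : a ∈ S b) :
    a ∈ Bset S := by
  obtain ⟨M, hM⟩ := hb
  refine ⟨M, fun n => ?_⟩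
  obtain ⟨s, t, hst⟩ := List.append_of_mem ha
  have hinf : [a] <:+: S b := ⟨s, t, by simp [hst]⟩
  have h1 : iter S n [a] <:+: iter S n (S b) := iter_infix S n hinf
  have h2 : iter S n (S b) = iter S (n + 1) [b] := by
    rw [iter_succ'']; simp [subst]
  calc (iter S n [a]).length ≤ (iter S n (S b)).length := h1.sublist.length_le
    _ = (iter S (n + 1) [b]).length := by rw [h2]
    _ ≤ M := hM (n + 1)

lemma tildeS_eq_nil {S : A → List A} {b : A} (hb : b ∈ Bset S) : tildeS S b = [] := by
  unfold tildeS tilde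
  rw [List.filter_eq_nil_iff]
  intro a ha
  simp only [decide_eq_true_eq]
  exact fun hC => hC (mem_Bset_of_mem_subst hb ha)

lemma tilde_subst (S : A → List A) (w : List A) :
    tilde S (subst S w) = subst (tildeS S) w := by
  induction w with
  | nil => rfl
  | cons a w ih =>
    simp only [subst, List.flatMap_cons, tilde, List.filter_append] at ih ⊢
    rw [ih]
    rfl

lemma subst_tildeS_tilde (S : A → List A) (w : List A) :
    subst (tildeS S) (tilde S w) = subst (tildeS S) w := by
  induction w with
  | nil => rfl
  | cons a w ih =>
    by_cases h : a ∈ Cset S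
    · simp only [tilde, List.filter_cons, decide_eq_true_eq, h, if_pos, subst,
        List.flatMap_cons] at ih ⊢
      rw [ih]
    · have hb : a ∈ Bset S := not_not.mp h
      simp only [tilde, List.filter_cons, decide_eq_true_eq, h, if_neg, subst,
        List.flatMap_cons, tildeS_eq_nil hb, List.nil_append] at ih ⊢
      exact ih

lemma tilde_iter (S : A → List A) {c : A} (hc : c ∈ Cset S) (n : ℕ) :
    iter (tildeS S) n [c] = tilde S (iter S n [c]) := by
  induction n with
  | zero =>
    simp [iter, tilde, List.filter_cons, hc]
  | succ k ih =>
    rw [iter_succ', ih, subst_tildeS_tilde, ← tilde_subst, ← iter_succ']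

/-- under (BG), the induced substitution `S̃ : C → C*` is primitive. -/
theorem statement5 {A : Type*} [Fintype A]
    (S : A → List A) (hS : IsSubstSystem S) (hBG : ∃ e : A, BG S e) :
    ∃ r : ℕ, 0 < r ∧ ∀ c ∈ Cset S, ∀ c' ∈ Cset S, c' ∈ iter (tildeS S) r [c] := by
  obtain ⟨e, hLe, hOe, L, hL0, hBdd⟩ := hBG
  -- N0 : from some point on, |S^n(e)| ≥ L
  obtain ⟨N0, hN0⟩ := Filter.eventually_atTop.mp (hLe.eventually_ge_atTop L)
  -- for every letter a, a ∈ S^(m a) (e)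
  choose m hm using hOe
  -- for every c ∈ C, there is g c with |S^(g c)(c)| ≥ L
  have hg0 : ∀ a : A, ∃ n, a ∈ Cset S → L ≤ (iter S n [a]).length := by
    intro a
    by_cases h : a ∈ Cset S
    · have h' : ¬ ∃ M : ℕ, ∀ n, (iter S n [a]).length ≤ M := h
      push_neg at h'
      obtain ⟨n, hn⟩ := h' L
      exact ⟨n, fun _ => hn.le⟩
    · exact ⟨0, fun h' => absurd h' h⟩
  choose g hg using hg0
  classical
  set M1 : ℕ := Finset.univ.sup g with hM1
  set M2 : ℕ := Finset.univ.sup m with hM2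
  refine ⟨N0 + M1 + M2 + 1, by omega, ?_⟩
  intro c hc c' hc'
  rw [tilde_iter S hc]
  suffices h : c' ∈ iter S (N0 + M1 + M2 + 1) [c] by
    exact List.mem_filter.mpr ⟨h, by simp [hc']⟩
  have hgc : g c ≤ M1 := Finset.le_sup (Finset.mem_univ c)
  have hmc : m c' ≤ M2 := Finset.le_sup (Finset.mem_univ c')
  -- e occurs in S^(g c)(c)
  have hec : e ∈ iter S (g c) [c] := by
    have hw : iter S (g c) [c] ∈ WS S := ⟨c, g c, List.infix_rfl⟩
    exact (hBdd _ hw (hg c hc)).sublist.subset (List.mem_singleton_self e)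
  -- e occurs in S^t(e) for t ≥ N0
  have hee : ∀ t, N0 ≤ t → e ∈ iter S t [e] := by
    intro t ht
    have hw : iter S t [e] ∈ WS S := ⟨e, t, List.infix_rfl⟩
    exact (hBdd _ hw (hN0 t ht)).sublist.subset (List.mem_singleton_self e)
  set t : ℕ := N0 + M1 + M2 + 1 - m c' - g c with htdef
  have ht : N0 ≤ t := by omega
  have h1 : e ∈ iter S (t + g c) [c] := mem_iter_trans S hec (hee t ht)
  have h2 : c' ∈ iter S (m c' + (t + g c)) [c] := mem_iter_trans S h1 (hm c')
  have : m c' + (t + g c) = N0 + M1 + M2 + 1 := by omega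
  rwa [this] at h2

end SubstLR
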